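/- With the abstraction of Theorem 1, the lower function never exceeds the upper function: f̲(s) ≤ f̄(s) for all s, provided the data is consistent with some L-Lipschitz function f (i.e., there exist s_j with ‖s_j - s̃_j‖ ≤ ε_s and |f(s_j) - ỹ_j| ≤ ε_w + ε_v for all j). -/
import Mathlib


/-- The lower abstraction function never exceeds the upper abstraction function,
provided the data is consistent with some L-Lipschitz function. -/
theorem lower_le_upper {n : ℕ} {J : Type*} [Fintype J] [Nonempty J]
    (L εs εw εv : ℝ) (hL : 0 ≤ L) (hεs : 0 ≤ εs) (hεw : 0 ≤ εw) (hεv : 0 ≤ εv)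
    (st : J → (Fin n → ℝ)) (yt : J → ℝ)
    (hconsistent : ∃ (f : (Fin n → ℝ) → ℝ) (s : J → (Fin n → ℝ)),
      (∀ x y, |f x - f y| ≤ L * ‖x - y‖) ∧
      (∀ j, ‖s j - st j‖ ≤ εs) ∧ (∀ j, |f (s j) - yt j| ≤ εw + εv)) :
    ∀ x : Fin n → ℝ,
      (Finset.univ.sup' Finset.univ_nonempty
        (fun j => yt j - L * ‖x - st j‖)) - (εw + εv + L * εs) ≤
      (Finset.univ.inf' Finset.univ_nonempty
        (fun j => yt j + L * ‖x - st j‖)) + (εw + εv + L * εs) := by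
  obtain ⟨f, s, hlip, hs, hy⟩ := hconsistent
  intro x
  rw [sub_le_iff_le_add, Finset.sup'_le_iff]
  intro j _
  rw [add_assoc, ← sub_le_iff_le_add, Finset.le_inf'_iff]
  intro i _
  have h1 : |f (s j) - f (s i)| ≤ L * ‖s j - s i‖ := hlip _ _
  have h2 : ‖s j - s i‖ ≤ ‖x - st j‖ + ‖x - st i‖ + (εs + εs) := by
    have t1 : ‖s j - s i‖ ≤ ‖s j - st j‖ + ‖st j - x‖ + ‖x - st i‖ + ‖st i - s i‖ := by
      calc ‖s j - s i‖ = ‖(s j - st j) + (st j - x) + (x - st i) + (st i - s i)‖ := by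
            congr 1; abel
        _ ≤ ‖s j - st j‖ + ‖st j - x‖ + ‖x - st i‖ + ‖st i - s i‖ := by
            refine le_trans (norm_add_le _ _) ?_
            refine add_le_add (le_trans (norm_add_le _ _) (add_le_add (norm_add_le _ _) le_rfl)) le_rfl
    have e1 : ‖st j - x‖ = ‖x - st j‖ := norm_sub_rev _ _
    have e2 : ‖st i - s i‖ = ‖s i - st i‖ := norm_sub_rev _ _
    have := hs j; have := hs i
    rw [e1, e2] at t1
    linarith [hs j, hs i]
  have hj := abs_le.mp (hy j)
  have hi := abs_le.mp (hy i)
  have h3 := abs_le.mp h1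
  have h4 : L * ‖s j - s i‖ ≤ L * (‖x - st j‖ + ‖x - st i‖ + (εs + εs)) :=
    mul_le_mul_of_nonneg_left h2 hL
  nlinarith
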